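/- arXiv:2511.02313 — 2 statements merged into one kernel-verified Lean document; each statement's English description precedes it below -/
import Mathlib

section
/- Let q be a prime power, d ≥ 1 an integer, and A, A_1 ⊆ 𝔽_q^d. Then ∑_{t_1 ∈ 𝔽_q} ∑_{x_1 ∈ A_1} (Π^A_{x_1}(t_1))^2 ≤ q^{-1}·|A|^2·|A_1| + q^d·|A|. -/
/-!
For `x ∈ 𝔽_q^d` let `E(x) = ∑_t Π^A_x(t)²`. Since the fibres `Π^A_x(t)` sum to `|A|`,
Cauchy–Schwarz gives `q E(x) ≥ |A|²` for every `x`. On the other hand `∑_x E(x)` counts the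
triples `(x, y, z)` with `y, z ∈ A` and `x · (y - z) = 0`; for `y ≠ z` this is a hyperplane
with `q^(d-1)` points, so `q ∑_x E(x) ≤ q^d (|A|² + q |A|)`. Hence the nonnegative excesses
`q E(x) - |A|²` sum to at most `q^(d+1) |A|` over all `x`, and a fortiori over `A₁`.
-/

/-- The dot product on `𝔽_q^d`. -/
def dotp {F : Type} [Field F] {d : ℕ} (x y : Fin d → F) : F := ∑ i, x i * y i

open Finset

section Fibers

variable {α β : Type*} [DecidableEq β] (f : α → β) (s : Finset α)

theorem Finset.sum_sq_card_fiber_eq_card_filter_prod [Fintype β] :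
    ∑ b, #{a ∈ s | f a = b} ^ 2 = #{p ∈ s ×ˢ s | f p.1 = f p.2} := by
  rw [card_eq_sum_card_fiberwise (f := fun p => f p.1) (t := univ)
    fun _ _ => mem_coe.2 (mem_univ _)]
  refine sum_congr rfl fun b _ => ?_
  rw [sq, ← card_product, filter_filter, ← filter_product]
  congr 1
  exact filter_congr fun p _ => by constructor <;> rintro ⟨h₁, h₂⟩ <;> simp_all

theorem Finset.card_sq_le_card_mul_sum_sq_card_fiber [Fintype β] :
    #s ^ 2 ≤ Fintype.card β * ∑ b, #{a ∈ s | f a = b} ^ 2 := by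
  have h := sq_sum_le_card_mul_sum_sq (s := univ) (f := fun b => #{a ∈ s | f a = b})
  rwa [← card_eq_sum_card_fiberwise fun _ _ => mem_coe.2 (mem_univ _)] at h

end Fibers

section DotProduct

variable {F ι : Type*} [Field F] [Fintype ι] [DecidableEq ι]

theorem dotProduct_left_surjective {v : ι → F} (hv : v ≠ 0) :
    Function.Surjective fun x : ι → F => x ⬝ᵥ v := by
  obtain ⟨i, hi⟩ := Function.ne_iff.mp hv
  exact fun t => ⟨Pi.single i (t / v i), by simp [single_dotProduct, div_mul_cancel₀ _ hi]⟩

variable [Fintype F] [DecidableEq F]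

theorem card_mul_card_filter_dotProduct_eq_zero {v : ι → F} (hv : v ≠ 0) :
    Fintype.card F * #{x : ι → F | x ⬝ᵥ v = 0} = Fintype.card F ^ Fintype.card ι := by
  let φ : (ι → F) →+ F := AddMonoidHom.mk' (· ⬝ᵥ v) fun x y => add_dotProduct x y v
  have hφ : Function.Surjective φ := dotProduct_left_surjective hv
  have hfiber (t : F) : #{x | φ x = t} = #{x | φ x = 0} :=
    AddMonoidHom.card_fiber_eq_of_mem_range φ (hφ t) (hφ 0)
  calc Fintype.card F * #{x : ι → F | x ⬝ᵥ v = 0} = ∑ t : F, #{x | φ x = t} := by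
        simp only [hfiber, sum_const, card_univ, smul_eq_mul]; rfl
    _ = Fintype.card F ^ Fintype.card ι := by
        rw [← card_eq_sum_card_fiberwise fun _ _ => mem_coe.2 (mem_univ _)]
        simp

theorem card_mul_card_filter_dotProduct_eq (y z : ι → F) :
    Fintype.card F * #{x : ι → F | x ⬝ᵥ y = x ⬝ᵥ z} =
      Fintype.card F ^ Fintype.card ι * if y = z then Fintype.card F else 1 := by
  split_ifs with h
  · simp [h, mul_comm]
  · rw [mul_one, ← card_mul_card_filter_dotProduct_eq_zero (sub_ne_zero.2 h)]
    simp only [dotProduct_sub, sub_eq_zero]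

theorem sum_sum_sq_card_fiber_dotProduct_eq_sum_card (A : Finset (ι → F)) :
    ∑ x : ι → F, ∑ t, #{y ∈ A | x ⬝ᵥ y = t} ^ 2 =
      ∑ p ∈ A ×ˢ A, #{x : ι → F | x ⬝ᵥ p.1 = x ⬝ᵥ p.2} := by
  rw [sum_congr rfl fun x _ => sum_sq_card_fiber_eq_card_filter_prod (x ⬝ᵥ ·) A]
  simp only [card_filter]
  exact sum_comm

theorem card_mul_sum_sum_sq_card_fiber_dotProduct_le (A : Finset (ι → F)) :
    Fintype.card F * ∑ x : ι → F, ∑ t, #{y ∈ A | x ⬝ᵥ y = t} ^ 2 ≤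
      Fintype.card F ^ Fintype.card ι * (#A ^ 2 + Fintype.card F * #A) := by
  calc Fintype.card F * ∑ x : ι → F, ∑ t, #{y ∈ A | x ⬝ᵥ y = t} ^ 2
      = Fintype.card F ^ Fintype.card ι *
          ∑ p ∈ A ×ˢ A, if p.1 = p.2 then Fintype.card F else 1 := by
        simp only [sum_sum_sq_card_fiber_dotProduct_eq_sum_card, mul_sum,
          card_mul_card_filter_dotProduct_eq]
    _ ≤ Fintype.card F ^ Fintype.card ι *
          ∑ p ∈ A ×ˢ A, (1 + if p.1 = p.2 then Fintype.card F else 0) := by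
        gcongr with p
        split_ifs <;> omega
    _ = Fintype.card F ^ Fintype.card ι * (#A ^ 2 + Fintype.card F * #A) := by
        rw [sum_add_distrib, sum_ite, sum_const_zero, add_zero, sum_const, sum_const, smul_eq_mul,
          smul_eq_mul, mul_one, card_product, sq, ← diag_eq_filter, diag_card]
        ring

end DotProduct

theorem Finset.sum_le_card_nsmul_add_sum_sub {ι M : Type*} [AddCommGroup M] [PartialOrder M]
    [IsOrderedAddMonoid M] {s t : Finset ι} {g : ι → M} {c : M} (hst : s ⊆ t)
    (hc : ∀ i ∈ t, c ≤ g i) :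
    ∑ i ∈ s, g i ≤ #s • c + ∑ i ∈ t, (g i - c) := by
  calc ∑ i ∈ s, g i = #s • c + ∑ i ∈ s, (g i - c) := by
        rw [sum_sub_distrib, sum_const, add_sub_cancel]
    _ ≤ #s • c + ∑ i ∈ t, (g i - c) :=
        add_le_add_right (sum_le_sum_of_subset_of_nonneg hst fun i hi _ => sub_nonneg.2 (hc i hi)) _

theorem stmt7_general (F : Type) [Field F] [Fintype F] [DecidableEq F] (d : ℕ)
    (A A₁ : Finset (Fin d → F)) :
    ∑ t₁ : F, ∑ x₁ ∈ A₁, (((A.filter fun y => dotp x₁ y = t₁).card : ℝ)) ^ 2 ≤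
      (Fintype.card F : ℝ)⁻¹ * (A.card : ℝ) ^ 2 * (A₁.card : ℝ) +
        (Fintype.card F : ℝ) ^ d * (A.card : ℝ) := by
  set q : ℝ := (Fintype.card F : ℝ)
  set E : (Fin d → F) → ℝ := fun x => ∑ t, (#{y ∈ A | x ⬝ᵥ y = t} : ℝ) ^ 2
  have hq : 0 < q := Nat.cast_pos.2 Fintype.card_pos
  have hlower (x : Fin d → F) : (#A : ℝ) ^ 2 ≤ q * E x := by
    simp only [q, E]
    exact_mod_cast card_sq_le_card_mul_sum_sq_card_fiber (x ⬝ᵥ ·) A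
  have htotal : q * ∑ x, E x ≤ q ^ d * (#A ^ 2 + q * #A) := by
    have h := card_mul_sum_sum_sq_card_fiber_dotProduct_le A
    rw [Fintype.card_fin] at h
    simp only [q, E]
    exact_mod_cast h
  have hA₁ : q * ∑ x ∈ A₁, E x ≤ #A₁ * #A ^ 2 + q ^ d * q * #A := by
    calc q * ∑ x ∈ A₁, E x ≤ #A₁ • (#A : ℝ) ^ 2 + ∑ x, (q * E x - #A ^ 2) := by
          rw [mul_sum]
          exact sum_le_card_nsmul_add_sum_sub (subset_univ A₁) fun x _ => hlower x
      _ ≤ #A₁ * #A ^ 2 + q ^ d * q * #A := by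
          rw [sum_sub_distrib, ← mul_sum, sum_const, card_univ, Fintype.card_fun, Fintype.card_fin,
            nsmul_eq_mul, nsmul_eq_mul]
          push_cast
          linarith
  calc ∑ t : F, ∑ x ∈ A₁, (#{y ∈ A | dotp x y = t} : ℝ) ^ 2 = ∑ x ∈ A₁, E x := sum_comm
    _ ≤ q⁻¹ * #A ^ 2 * #A₁ + q ^ d * #A := by
        rw [← mul_le_mul_iff_right₀ hq]
        field_simp
        linarith

/-- For `A, A_1 ⊆ 𝔽_q^d`,
`∑_{t_1 ∈ 𝔽_q} ∑_{x_1 ∈ A_1} (Π^A_{x_1}(t_1))^2 ≤ q^{-1} |A|^2 |A_1| + q^d |A|`. -/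
theorem stmt7 (F : Type) [Field F] [Fintype F] [DecidableEq F] (d : ℕ) (hd : 1 ≤ d)
    (A A₁ : Finset (Fin d → F)) :
    ∑ t₁ : F, ∑ x₁ ∈ A₁, (((A.filter fun y => dotp x₁ y = t₁).card : ℝ)) ^ 2 ≤
      (Fintype.card F : ℝ)⁻¹ * (A.card : ℝ) ^ 2 * (A₁.card : ℝ) +
        (Fintype.card F : ℝ) ^ d * (A.card : ℝ) :=
  stmt7_general F d A A₁
end

section
/- Let q be a prime power, d ≥ 1 an integer, χ a nontrivial additive character of 𝔽_q, A ⊆ 𝔽_q^d, and α ∈ 𝔽_q with α ≠ 0. Then ∑_{x ∈ 𝔽_q^d} |S_{A,α}(x)|^2 ≤ q^{d+1}·|A|, where S_{A,α}(x) = ∑_{s ∈ 𝔽_q^*} ∑_{y ∈ A} χ(s(x·y − α)). -/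
open Finset ComplexConjugate

theorem AddChar.map_sum_eq_prod {A M ι : Type*} [AddCommMonoid A] [CommMonoid M]
    (ψ : AddChar A M) (s : Finset ι) (f : ι → A) : ψ (∑ i ∈ s, f i) = ∏ i ∈ s, ψ (f i) :=
  map_prod ψ.toMonoidHom (fun i => Multiplicative.ofAdd (f i)) s

section

variable {F : Type} [Field F] {d : ℕ}

theorem dotp_sub_right (x y z : Fin d → F) : dotp x (y - z) = dotp x y - dotp x z :=
  dotProduct_sub x y z

theorem dotp_smul_right (x y : Fin d → F) (s : F) : dotp x (s • y) = s * dotp x y :=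
  dotProduct_smul s x y

variable [Fintype F] [DecidableEq F]

theorem sum_erase_zero_comp_mul_inv {M : Type*} [AddCommMonoid M] (f : F → M) {c : F}
    (hc : c ≠ 0) : ∑ t ∈ univ.erase 0, f (c * t⁻¹) = ∑ t ∈ univ.erase 0, f t :=
  Finset.sum_nbij' (fun t => c * t⁻¹) (fun t => c * t⁻¹) (by simp [hc]) (by simp [hc])
    (fun t _ => by rw [mul_inv, inv_inv, mul_inv_cancel_left₀ hc])
    (fun t _ => by rw [mul_inv, inv_inv, mul_inv_cancel_left₀ hc]) fun _ _ => rfl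

theorem sum_product_ite_smul_eq {M : Type*} [AddCommMonoid M] (A : Finset (Fin d → F))
    (g : F → M) {s : F} (hs : s ≠ 0) (y : Fin d → F) :
    ∑ j ∈ univ.erase 0 ×ˢ A, (if s • y = j.1 • j.2 then g j.1 else 0) =
      ∑ t ∈ univ.erase 0, if t • y ∈ A then g (s * t⁻¹) else 0 := by
  rw [Finset.sum_product, ← sum_erase_zero_comp_mul_inv _ hs]
  refine Finset.sum_congr rfl fun t ht => ?_
  have ht : t ≠ 0 := Finset.ne_of_mem_erase ht
  have hsmul (y' : Fin d → F) : s • y = (s * t⁻¹) • y' ↔ t • y = y' := by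
    rw [← smul_smul, ← inv_smul_eq_iff₀ hs, inv_smul_smul₀ hs, eq_inv_smul_iff₀ ht]
  simp_rw [hsmul]
  exact Finset.sum_ite_eq _ _ _

theorem sum_erase_zero_ite_smul_mem (A : Finset (Fin d → F)) {y : Fin d → F} (hy : y ∈ A)
    (q : ℂ) :
    ∑ t ∈ univ.erase (0 : F), (if t • y ∈ A then (if t = 1 then q else 0) - 1 else 0) =
      q - #{t ∈ univ.erase (0 : F) | t • y ∈ A} := by
  rw [← Finset.sum_filter, Finset.sum_sub_distrib, Finset.sum_ite_eq']
  simp [hy]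

variable {χ : AddChar F ℂ}

theorem sum_addChar_dotp (hχ : χ ≠ 1) (v : Fin d → F) :
    ∑ x : Fin d → F, χ (dotp x v) = if v = 0 then (Fintype.card F : ℂ) ^ d else 0 := by
  calc ∑ x : Fin d → F, χ (dotp x v) = ∑ x : Fin d → F, ∏ i, χ (x i * v i) := by
        simp only [dotp, AddChar.map_sum_eq_prod]
    _ = ∏ i, ∑ a : F, χ (a * v i) := (Fintype.prod_sum fun i a => χ (a * v i)).symm
    _ = ∏ i, if v i = 0 then (Fintype.card F : ℂ) else 0 := by
        simp only [AddChar.sum_mulShift _ (.of_ne_one hχ), Nat.cast_ite, Nat.cast_zero]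
    _ = _ := by simp [Finset.prod_ite_zero, funext_iff]

theorem sum_norm_sq_sum_mul_addChar_dotp (hχ : χ ≠ 1) {ι : Type*} (P : Finset ι) (w : ι → ℂ)
    (v : ι → Fin d → F) :
    ((∑ x : Fin d → F, ‖∑ i ∈ P, w i * χ (dotp x (v i))‖ ^ 2 : ℝ) : ℂ) =
      (Fintype.card F : ℂ) ^ d * ∑ i ∈ P, ∑ j ∈ P, if v i = v j then w i * conj (w j) else 0 := by
  have term (x : Fin d → F) (i j : ι) :
      w i * χ (dotp x (v i)) * conj (w j * χ (dotp x (v j))) =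
        w i * conj (w j) * χ (dotp x (v i - v j)) := by
    rw [map_mul, ← AddChar.map_neg_eq_conj, dotp_sub_right, sub_eq_add_neg,
      AddChar.map_add_eq_mul]
    ring
  calc ((∑ x : Fin d → F, ‖∑ i ∈ P, w i * χ (dotp x (v i))‖ ^ 2 : ℝ) : ℂ)
      = ∑ x : Fin d → F, ∑ i ∈ P, ∑ j ∈ P, w i * conj (w j) * χ (dotp x (v i - v j)) := by
        push_cast
        simp_rw [← Complex.mul_conj', map_sum, Finset.sum_mul_sum, term]
    _ = ∑ i ∈ P, ∑ j ∈ P, w i * conj (w j) * ∑ x : Fin d → F, χ (dotp x (v i - v j)) := by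
        simp_rw [Finset.mul_sum]
        rw [Finset.sum_comm]
        exact Finset.sum_congr rfl fun i _ => Finset.sum_comm
    _ = _ := by
        simp_rw [sum_addChar_dotp hχ, sub_eq_zero, Finset.mul_sum, mul_ite, mul_zero, mul_comm]

theorem sum_erase_zero_addChar_mul (hχ : χ ≠ 1) (b : F) :
    ∑ s ∈ univ.erase 0, χ (s * b) = (if b = 0 then (Fintype.card F : ℂ) else 0) - 1 := by
  rw [Finset.sum_erase_eq_sub (mem_univ 0), AddChar.sum_mulShift _ (.of_ne_one hχ)]
  simp

theorem sum_product_sum_product_ite_smul_eq (hχ : χ ≠ 1) (A : Finset (Fin d → F)) {α : F}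
    (hα : α ≠ 0) :
    ∑ i ∈ univ.erase (0 : F) ×ˢ A, ∑ j ∈ univ.erase (0 : F) ×ˢ A,
        (if i.1 • i.2 = j.1 • j.2 then χ (-(i.1 * α)) * conj (χ (-(j.1 * α))) else 0) =
      ∑ y ∈ A, ((Fintype.card F : ℂ) - #{t ∈ univ.erase (0 : F) | t • y ∈ A}) := by
  have weight (s t : F) :
      χ (-(s * α)) * conj (χ (-(s * t⁻¹ * α))) = χ (s * ((t⁻¹ - 1) * α)) := by
    rw [← AddChar.map_neg_eq_conj, ← AddChar.map_add_eq_mul]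
    ring_nf
  calc _ = ∑ s ∈ univ.erase (0 : F), ∑ y ∈ A, ∑ t ∈ univ.erase (0 : F),
        if t • y ∈ A then χ (s * ((t⁻¹ - 1) * α)) else 0 := by
        rw [Finset.sum_product]
        refine Finset.sum_congr rfl fun s hs => Finset.sum_congr rfl fun y _ => ?_
        dsimp only
        rw [sum_product_ite_smul_eq A (fun s' => χ (-(s * α)) * conj (χ (-(s' * α))))
          (Finset.ne_of_mem_erase hs)]
        simp_rw [weight]
    _ = ∑ y ∈ A, ∑ t ∈ univ.erase (0 : F),
        if t • y ∈ A then ∑ s ∈ univ.erase (0 : F), χ (s * ((t⁻¹ - 1) * α)) else 0 := by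
        rw [Finset.sum_comm]
        refine Finset.sum_congr rfl fun y _ => ?_
        rw [Finset.sum_comm]
        simp_rw [Finset.sum_ite_irrel, Finset.sum_const_zero]
    _ = _ := by
        refine Finset.sum_congr rfl fun y hy => ?_
        have hβ (t : F) : (t⁻¹ - 1) * α = 0 ↔ t = 1 := by simp [hα, sub_eq_zero]
        simp_rw [sum_erase_zero_addChar_mul hχ, hβ]
        exact sum_erase_zero_ite_smul_mem A hy _

end

theorem stmt11_general (F : Type) [Field F] [Fintype F] [DecidableEq F] (d : ℕ)
    (χ : AddChar F ℂ) (hχ : χ ≠ 1) (A : Finset (Fin d → F)) (α : F) (hα : α ≠ 0) :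
    ∑ x : Fin d → F,
        (‖(∑ s ∈ Finset.univ.erase (0 : F), ∑ y ∈ A,
          χ (s * (dotp x y - α)))‖) ^ 2 ≤
      (Fintype.card F : ℝ) ^ (d + 1) * (A.card : ℝ) := by
  have hS (x : Fin d → F) : ∑ s ∈ univ.erase (0 : F), ∑ y ∈ A, χ (s * (dotp x y - α)) =
      ∑ p ∈ univ.erase (0 : F) ×ˢ A, χ (-(p.1 * α)) * χ (dotp x (p.1 • p.2)) := by
    rw [Finset.sum_product]
    refine Finset.sum_congr rfl fun s _ => Finset.sum_congr rfl fun y _ => ?_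
    rw [dotp_smul_right, ← AddChar.map_add_eq_mul]
    ring_nf
  have hsum :
      ∑ x : Fin d → F, ‖∑ s ∈ univ.erase (0 : F), ∑ y ∈ A, χ (s * (dotp x y - α))‖ ^ 2 =
        (Fintype.card F : ℝ) ^ d *
          ∑ y ∈ A, ((Fintype.card F : ℝ) - #{t ∈ univ.erase (0 : F) | t • y ∈ A}) := by
    apply Complex.ofReal_injective
    simp_rw [hS]
    rw [sum_norm_sq_sum_mul_addChar_dotp hχ, sum_product_sum_product_ite_smul_eq hχ A hα]
    push_cast
    rfl
  rw [hsum, pow_succ, mul_assoc]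
  gcongr
  calc ∑ y ∈ A, ((Fintype.card F : ℝ) - #{t ∈ univ.erase (0 : F) | t • y ∈ A})
      ≤ ∑ _y ∈ A, (Fintype.card F : ℝ) := Finset.sum_le_sum fun y _ => by simp
    _ = _ := by simp [mul_comm]

/-- For `A ⊆ 𝔽_q^d` and `α ≠ 0`,
`∑_{x ∈ 𝔽_q^d} |S_{A,α}(x)|^2 ≤ q^{d+1} |A|`, where
`S_{A,α}(x) = ∑_{s ∈ 𝔽_q^*} ∑_{y ∈ A} χ(s(x·y − α))`. -/
theorem stmt11 (F : Type) [Field F] [Fintype F] [DecidableEq F] (d : ℕ) (hd : 1 ≤ d)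
    (χ : AddChar F ℂ) (hχ : χ ≠ 1) (A : Finset (Fin d → F)) (α : F) (hα : α ≠ 0) :
    ∑ x : Fin d → F,
        (‖(∑ s ∈ Finset.univ.erase (0 : F), ∑ y ∈ A,
          χ (s * (dotp x y - α)))‖) ^ 2 ≤
      (Fintype.card F : ℝ) ^ (d + 1) * (A.card : ℝ) :=
  stmt11_general F d χ hχ A α hα
end
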